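/- If the atom dependency graph of a defeasible theory D is acyclic, then D is decisive: for every literal p occurring in D, either D ⊢ +∂ p or D ⊢ −∂ p. -/

import Mathlib

namespace DL

abbrev Atom := ℕ

/-- A literal: an atom with a polarity. -/
structure Lit where
  atom : Atom
  pos : Bool
deriving DecidableEq

/-- The complement `∼p` of a literal. -/
def Lit.neg (l : Lit) : Lit := ⟨l.atom, !l.pos⟩

/-- A defeasible rule: a finite set of antecedent literals and a head literal. -/
structure Rule where
  ante : Finset Lit
  head : Lit
deriving DecidableEq

/-- A defeasible theory: facts, defeasible rules, and a superiority relation. -/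
structure DTheory where
  facts : Finset Lit
  rules : Finset Rule
  sup : Rule → Rule → Prop

/-- A superiority relation is acyclic iff its transitive closure is irreflexive. -/
def Acyclic (sup : Rule → Rule → Prop) : Prop :=
  Irreflexive (Relation.TransGen sup)

def DTheory.FactsConsistent (D : DTheory) : Prop :=
  ∀ l ∈ D.facts, l.neg ∉ D.facts

/-- Well-formedness of a defeasible theory: consistent facts, acyclic superiority
relation defined on the rules of the theory. -/
def DTheory.WellFormed (D : DTheory) : Prop :=
  D.FactsConsistent ∧ Acyclic D.sup ∧ ∀ r s, D.sup r s → r ∈ D.rules ∧ s ∈ D.rules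

/-- Proof tags: Δ, Σ, σ, ω, φ, ∂. -/
inductive Tag | delta | Sig | sgm | omg | phi | prt
deriving DecidableEq

/-- A tagged literal: a tag, a sign (`true` = `+`, `false` = `−`), and a literal. -/
abbrev TLit := Tag × Bool × Lit

/-- The proof conditions of Defeasible Logic (defeasible rules only), relative to
the preceding part `P` of a proof sequence. -/
def Cond (D : DTheory) (P : List TLit) : Tag → Bool → Lit → Prop
  | .delta, true, q => q ∈ D.facts
  | .delta, false, q => q ∉ D.facts
  | .Sig, true, q =>
      (Tag.delta, true, q) ∈ P ∨
      ∃ r ∈ D.rules, r.head = q ∧ ∀ a ∈ r.ante, (Tag.Sig, true, a) ∈ P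
  | .Sig, false, q =>
      (Tag.delta, true, q) ∉ P ∧
      ∀ r ∈ D.rules, r.head = q → ∃ a ∈ r.ante, (Tag.Sig, false, a) ∈ P
  | .sgm, true, q =>
      (Tag.delta, true, q) ∈ P ∨
      ∃ r ∈ D.rules, r.head = q ∧ (∀ a ∈ r.ante, (Tag.sgm, true, a) ∈ P) ∧
        ∀ s ∈ D.rules, s.head = q.neg →
          (∃ a ∈ s.ante, (Tag.prt, false, a) ∈ P) ∨ ¬ D.sup s r
  | .sgm, false, q =>
      (Tag.delta, true, q) ∉ P ∧
      ∀ r ∈ D.rules, r.head = q →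
        (∃ a ∈ r.ante, (Tag.sgm, false, a) ∈ P) ∨
        ∃ s ∈ D.rules, s.head = q.neg ∧ (∀ a ∈ s.ante, (Tag.prt, true, a) ∈ P) ∧ D.sup s r
  | .omg, true, q =>
      (Tag.delta, true, q) ∈ P ∨
      ∃ r ∈ D.rules, r.head = q ∧ ∀ a ∈ r.ante, (Tag.prt, true, a) ∈ P
  | .omg, false, q =>
      (Tag.delta, true, q) ∉ P ∧
      ∀ r ∈ D.rules, r.head = q → ∃ a ∈ r.ante, (Tag.prt, false, a) ∈ P
  | .phi, true, q =>
      (Tag.delta, true, q) ∈ P ∨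
      ∃ r ∈ D.rules, r.head = q ∧ (∀ a ∈ r.ante, (Tag.phi, true, a) ∈ P) ∧
        ∀ s ∈ D.rules, s.head = q.neg → ∃ a ∈ s.ante, (Tag.Sig, false, a) ∈ P
  | .phi, false, q =>
      (Tag.delta, true, q) ∉ P ∧
      ∀ r ∈ D.rules, r.head = q →
        (∃ a ∈ r.ante, (Tag.phi, false, a) ∈ P) ∨
        ∃ s ∈ D.rules, s.head = q.neg ∧ ∀ a ∈ s.ante, (Tag.Sig, true, a) ∈ P
  | .prt, true, q =>
      (Tag.delta, true, q) ∈ P ∨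
      ((Tag.delta, false, q.neg) ∈ P ∧
       (∃ r ∈ D.rules, r.head = q ∧ ∀ a ∈ r.ante, (Tag.prt, true, a) ∈ P) ∧
       ∀ s ∈ D.rules, s.head = q.neg →
         (∃ a ∈ s.ante, (Tag.prt, false, a) ∈ P) ∨
         ∃ t ∈ D.rules, t.head = q ∧ (∀ a ∈ t.ante, (Tag.prt, true, a) ∈ P) ∧ D.sup t s)
  | .prt, false, q =>
      (Tag.delta, true, q) ∉ P ∧
      ((Tag.delta, true, q.neg) ∈ P ∨
       (∀ r ∈ D.rules, r.head = q → ∃ a ∈ r.ante, (Tag.prt, false, a) ∈ P) ∨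
       ∃ s ∈ D.rules, s.head = q.neg ∧ (∀ a ∈ s.ante, (Tag.prt, true, a) ∈ P) ∧
         ∀ t ∈ D.rules, t.head = q →
           (∃ a ∈ t.ante, (Tag.prt, false, a) ∈ P) ∨ ¬ D.sup t s)

/-- A proof (derivation) is a finite sequence of tagged literals each of which
satisfies the proof condition relative to the preceding part of the sequence. -/
inductive ValidProof (D : DTheory) : List TLit → Prop
  | nil : ValidProof D []
  | snoc {P : List TLit} {t : Tag} {s : Bool} {q : Lit} :
      ValidProof D P → Cond D P t s q → ValidProof D (P ++ [(t, s, q)])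

/-- `D ⊢ ±# q`: some valid proof in `D` contains the tagged literal. -/
def Proves (D : DTheory) (t : Tag) (s : Bool) (q : Lit) : Prop :=
  ∃ P, ValidProof D P ∧ (t, s, q) ∈ P

/-- A theory is consistent iff it never defeasibly proves both a literal and
its complement. -/
def Consistent (D : DTheory) : Prop :=
  ∀ p : Lit, ¬ (Proves D .prt true p ∧ Proves D .prt true p.neg)

/-- `a` depends on `b` iff `b = a`, or for every rule for `a` either `b` is an
antecedent or some antecedent depends on `b` (least such relation,
impredicatively encoded). -/
def DependsOn (D : DTheory) (a b : Lit) : Prop :=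
  ∀ S : Lit → Lit → Prop,
    (∀ x, S x x) →
    (∀ x y, (∀ r ∈ D.rules, r.head = x → y ∈ r.ante ∨ ∃ c ∈ r.ante, S c y) → S x y) →
    S a b

/-- `p` is ∂-unreachable iff every rule for `p` either has two antecedents
depending on complementary literals or has a ∂-unreachable antecedent
(least such predicate, impredicatively encoded). -/
def Unreachable (D : DTheory) (p : Lit) : Prop :=
  ∀ S : Lit → Prop,
    (∀ x, (∀ r ∈ D.rules, r.head = x →
        (∃ l : Lit, ∃ a ∈ r.ante, ∃ b ∈ r.ante, DependsOn D a l ∧ DependsOn D b l.neg) ∨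
        ∃ d ∈ r.ante, S d) → S x) →
    S p

/-- The literal `p` appears in the theory `D` (its atom occurs in `D`). -/
def AppearsIn (p : Lit) (D : DTheory) : Prop :=
  (∃ l ∈ D.facts, l.atom = p.atom) ∨
  ∃ r ∈ D.rules, r.head.atom = p.atom ∨ ∃ l ∈ r.ante, l.atom = p.atom

/-- Positive part of the belief set of a defeasible theory. -/
def BSplus (D : DTheory) : Set Lit := {p | AppearsIn p D ∧ Proves D .prt true p}

/-- Negative part of the belief set of a defeasible theory. -/
def BSminus (D : DTheory) : Set Lit := {p | AppearsIn p D ∧ Proves D .prt false p}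

/-- The belief set of a defeasible theory. -/
def BS (D : DTheory) : Set Lit := BSplus D ∪ BSminus D

/-- Edge of the atom dependency graph: from atom `a` to atom `b` whenever some
rule has head with atom `b` and an antecedent literal with atom `a`. -/
def AtomEdge (D : DTheory) (a b : Atom) : Prop :=
  ∃ r ∈ D.rules, r.head.atom = b ∧ ∃ l ∈ r.ante, l.atom = a

/-- A theory is decisive iff every literal appearing in it is defeasibly
provable or defeasibly refuted. -/
def Decisive (D : DTheory) : Prop :=
  ∀ p : Lit, AppearsIn p D → Proves D .prt true p ∨ Proves D .prt false p

end DL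

/-!
By well-founded induction along the atom dependency graph, every literal `p` can be decided by
*extending* an arbitrary valid proof: first decide every antecedent of every rule for `p` or `∼p`
(their atoms precede `p.atom`), then record `±Δ ∼p`. Now each rule for `p` or `∼p` is either
applicable (all antecedents `+∂`) or discarded (some antecedent `−∂`), and with that the proof
conditions of `+∂ p` and `−∂ p` are exact complements, so one of them can be appended.

Proofs are extended rather than concatenated because the negative conditions require
`+Δ q ∉ P`, which is not preserved when lines are inserted in front.
-/

namespace DL

theorem wellFounded_of_finite_field_of_transGen_irrefl {α : Type*} {r : α → α → Prop}
    {s : Set α} (hs : s.Finite) (hr : ∀ a b, r a b → a ∈ s ∧ b ∈ s)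
    (hirr : ∀ a, ¬ Relation.TransGen r a a) : WellFounded r := by
  have : IsStrictOrder α (Relation.TransGen r) :=
    { irrefl := hirr, trans := fun _ _ _ => Relation.TransGen.trans }
  exact Subrelation.wf (fun {a b} hab => ⟨Relation.TransGen.single hab, hr a b hab⟩)
    (Set.wellFoundedOn_iff.1 (hs.wellFoundedOn (r := Relation.TransGen r)))

def DTheory.ruleAtoms (D : DTheory) : Finset Atom :=
  D.rules.biUnion fun r => insert r.head.atom (r.ante.image Lit.atom)

theorem AtomEdge.mem_ruleAtoms {D : DTheory} {a b : Atom} (h : AtomEdge D a b) :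
    a ∈ D.ruleAtoms ∧ b ∈ D.ruleAtoms := by
  obtain ⟨r, hr, rfl, l, hl, rfl⟩ := h
  exact ⟨Finset.mem_biUnion.2 ⟨r, hr, Finset.mem_insert_of_mem (Finset.mem_image_of_mem _ hl)⟩,
    Finset.mem_biUnion.2 ⟨r, hr, Finset.mem_insert_self _ _⟩⟩

theorem wellFounded_atomEdge {D : DTheory}
    (hacyc : ∀ a, ¬ Relation.TransGen (AtomEdge D) a a) : WellFounded (AtomEdge D) :=
  wellFounded_of_finite_field_of_transGen_irrefl D.ruleAtoms.finite_toSet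
    (fun _ _ h => h.mem_ruleAtoms) hacyc

theorem ValidProof.mem_facts_of_delta_mem {D : DTheory} {P : List TLit}
    (hP : ValidProof D P) {q : Lit} (hq : (Tag.delta, true, q) ∈ P) : q ∈ D.facts := by
  induction hP with
  | nil => simp at hq
  | snoc _ hc ih =>
    rcases List.mem_append.1 hq with hq | hq
    · exact ih hq
    · obtain ⟨rfl, rfl, rfl⟩ := Prod.ext_iff.1 (List.mem_singleton.1 hq)
      exact hc

def DecidedIn (P : List TLit) (p : Lit) : Prop :=
  (Tag.prt, true, p) ∈ P ∨ (Tag.prt, false, p) ∈ P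

theorem DecidedIn.mono {P Q : List TLit} {p : Lit} (h : DecidedIn P p) (hPQ : P <+: Q) :
    DecidedIn Q p :=
  h.imp (hPQ.subset ·) (hPQ.subset ·)

def Applicable (P : List TLit) (r : Rule) : Prop :=
  ∀ a ∈ r.ante, (Tag.prt, true, a) ∈ P

def Discarded (P : List TLit) (r : Rule) : Prop :=
  ∃ a ∈ r.ante, (Tag.prt, false, a) ∈ P

theorem applicable_or_discarded {P : List TLit} {r : Rule} (h : ∀ a ∈ r.ante, DecidedIn P a) :
    Applicable P r ∨ Discarded P r := by
  by_contra! hnot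
  obtain ⟨a, ha, hna⟩ := not_forall₂.1 hnot.1
  exact (h a ha).elim hna fun h' => hnot.2 ⟨a, ha, h'⟩

def ExtendsToDecision (D : DTheory) (p : Lit) : Prop :=
  ∀ P, ValidProof D P → ∃ Q, P <+: Q ∧ ValidProof D Q ∧ DecidedIn Q p

theorem exists_extension_delta {D : DTheory} {P : List TLit} (hP : ValidProof D P) (q : Lit) :
    ∃ Q, P <+: Q ∧ ValidProof D Q ∧ ((Tag.delta, true, q) ∈ Q ∨ (Tag.delta, false, q) ∈ Q) := by
  by_cases hq : q ∈ D.facts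
  · exact ⟨_, List.prefix_append _ _, hP.snoc (t := .delta) (s := true) hq, by simp⟩
  · exact ⟨_, List.prefix_append _ _, hP.snoc (t := .delta) (s := false) hq, by simp⟩

theorem exists_extension_decidedIn_finset {D : DTheory} (S : Finset Lit)
    (hS : ∀ a ∈ S, ExtendsToDecision D a) {P : List TLit} (hP : ValidProof D P) :
    ∃ Q, P <+: Q ∧ ValidProof D Q ∧ ∀ a ∈ S, DecidedIn Q a := by
  induction S using Finset.induction with
  | empty => exact ⟨P, List.prefix_refl P, hP, by simp⟩
  | insert b S _ ih =>
    obtain ⟨Q, hPQ, hQ, hQS⟩ := ih fun a ha => hS a (Finset.mem_insert_of_mem ha)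
    obtain ⟨R, hQR, hR, hRb⟩ := hS b (Finset.mem_insert_self b S) Q hQ
    refine ⟨R, hPQ.trans hQR, hR, fun a ha => ?_⟩
    rcases Finset.mem_insert.1 ha with rfl | ha
    · exact hRb
    · exact (hQS a ha).mono hQR

theorem extendsToDecision_of_mem_facts {D : DTheory} {p : Lit} (hp : p ∈ D.facts) :
    ExtendsToDecision D p := by
  intro P hP
  have hΔ : ValidProof D (P ++ [(.delta, true, p)]) := hP.snoc hp
  have hΔmem : (Tag.delta, true, p) ∈ P ++ [(.delta, true, p)] := by simp
  exact ⟨_, (List.prefix_append _ _).trans (List.prefix_append _ _),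
    hΔ.snoc (t := .prt) (s := true) (Or.inl hΔmem), Or.inl (by simp)⟩

theorem cond_prt_true_or_false {D : DTheory} {P : List TLit} {p : Lit}
    (hP : ValidProof D P) (hp : p ∉ D.facts)
    (hneg : (Tag.delta, true, p.neg) ∈ P ∨ (Tag.delta, false, p.neg) ∈ P)
    (hrules : ∀ r ∈ D.rules, r.head = p ∨ r.head = p.neg → Applicable P r ∨ Discarded P r) :
    Cond D P .prt true p ∨ Cond D P .prt false p := by
  have hnotΔ : (Tag.delta, true, p) ∉ P := fun h => hp (hP.mem_facts_of_delta_mem h)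
  rcases hneg with hneg | hneg
  · exact Or.inr ⟨hnotΔ, Or.inl hneg⟩
  by_cases hdisc : ∀ r ∈ D.rules, r.head = p → Discarded P r
  · exact Or.inr ⟨hnotΔ, Or.inr (Or.inl hdisc)⟩
  push Not at hdisc
  obtain ⟨r, hr, hrp, hrd⟩ := hdisc
  have hrA : Applicable P r := (hrules r hr (Or.inl hrp)).resolve_right hrd
  by_cases hbeaten : ∀ s ∈ D.rules, s.head = p.neg →
      Discarded P s ∨ ∃ t ∈ D.rules, t.head = p ∧ Applicable P t ∧ D.sup t s
  · exact Or.inl (Or.inr ⟨hneg, ⟨r, hr, hrp, hrA⟩, hbeaten⟩)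
  push Not at hbeaten
  obtain ⟨s, hs, hsp, hsd, hst⟩ := hbeaten
  have hsA : Applicable P s := (hrules s hs (Or.inr hsp)).resolve_right hsd
  exact Or.inr ⟨hnotΔ, Or.inr (Or.inr ⟨s, hs, hsp, hsA, fun t ht htp =>
    (hrules t ht (Or.inl htp)).symm.imp_right (hst t ht htp)⟩)⟩

theorem extendsToDecision_of_not_mem_facts {D : DTheory} {p : Lit} (hp : p ∉ D.facts)
    (ih : ∀ q : Lit, AtomEdge D q.atom p.atom → ExtendsToDecision D q) :
    ExtendsToDecision D p := by
  intro P hP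
  set S := (D.rules.filter fun r => r.head.atom = p.atom).biUnion Rule.ante
  have hS : ∀ a ∈ S, ExtendsToDecision D a := by
    intro a ha
    obtain ⟨r, hr, ha⟩ := Finset.mem_biUnion.1 ha
    obtain ⟨hr, hrp⟩ := Finset.mem_filter.1 hr
    exact ih a ⟨r, hr, hrp, a, ha, rfl⟩
  obtain ⟨Q, hPQ, hQ, hQS⟩ := exists_extension_decidedIn_finset S hS hP
  obtain ⟨R, hQR, hR, hRneg⟩ := exists_extension_delta hQ p.neg
  have hrules : ∀ r ∈ D.rules, r.head = p ∨ r.head = p.neg →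
      Applicable R r ∨ Discarded R r := by
    intro r hr hhead
    have hrp : r.head.atom = p.atom := hhead.elim (congrArg Lit.atom) (congrArg Lit.atom)
    exact applicable_or_discarded fun a ha =>
      (hQS a (Finset.mem_biUnion.2 ⟨r, Finset.mem_filter.2 ⟨hr, hrp⟩, ha⟩)).mono hQR
  have hPR (x : TLit) : P <+: R ++ [x] := hPQ.trans (hQR.trans (List.prefix_append _ _))
  rcases cond_prt_true_or_false hR hp hRneg hrules with hc | hc
  · exact ⟨_, hPR _, hR.snoc hc, Or.inl (by simp)⟩
  · exact ⟨_, hPR _, hR.snoc hc, Or.inr (by simp)⟩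

theorem extendsToDecision_of_wellFounded {D : DTheory} (hwf : WellFounded (AtomEdge D))
    (p : Lit) : ExtendsToDecision D p :=
  (InvImage.wf Lit.atom hwf).induction p fun p ih => by
    by_cases hp : p ∈ D.facts
    · exact extendsToDecision_of_mem_facts hp
    · exact extendsToDecision_of_not_mem_facts hp ih

end DL

open DL in
theorem stmt5_general (D : DTheory)
    (hacyc : Irreflexive (Relation.TransGen (AtomEdge D))) :
    Decisive D := by
  intro p _
  obtain ⟨P, -, hP, hdec⟩ :=
    extendsToDecision_of_wellFounded (wellFounded_atomEdge hacyc) p [] .nil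
  exact hdec.imp (fun h => ⟨P, hP, h⟩) (fun h => ⟨P, hP, h⟩)

open DL in
/-- If the atom dependency graph of a defeasible theory is acyclic, then the
theory is decisive. -/
theorem stmt5 (D : DTheory) (hwf : D.WellFormed)
    (hacyc : Irreflexive (Relation.TransGen (AtomEdge D))) :
    Decisive D :=
  stmt5_general D hacyc
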